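/- arXiv:2110.13908 — 2 statements merged into one kernel-verified Lean document; each statement's English description precedes it below -/
import Mathlib

section
/- Let N be one of the integers 2, 3, 4, 5, 6, 7, 8, 9, 10, 12, 13, 16, 18, 25. Then there exists a unique family of integers (r_δ), indexed by the positive divisors δ of N, satisfying: (a) ∑_{δ∣N} r_δ·δ = −24; (b) ∑_{δ∣N} r_δ·(N/δ) = 24; (c) ∑_{δ∣N} r_δ = 0; and (e) for every divisor d of N other than 1 and N, ∑_{δ∣N} r_δ·gcd(δ, d)²·(N/δ)·(N/d)·gcd(d, N/d) = 0. Moreover, this unique family additionally satisfies (d): ∏_{δ∣N} (N/δ)^{r_δ} is the square of a rational number. -/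
/-- Conditions (a), (b), (c), (e) on the exponent family `r` of an eta product
`∏_{δ ∣ N} η(δτ)^{r_δ}` forcing it to be a Hauptmodul of `X₀(N)`. -/
def HauptmodulExponents (N : ℕ) (r : ℕ → ℤ) : Prop :=
  (∀ δ, δ ∉ N.divisors → r δ = 0) ∧
  (∑ δ ∈ N.divisors, r δ * (δ : ℤ) = -24) ∧
  (∑ δ ∈ N.divisors, r δ * ((N / δ : ℕ) : ℤ) = 24) ∧
  (∑ δ ∈ N.divisors, r δ = 0) ∧
  (∀ d ∈ N.divisors, d ≠ 1 → d ≠ N →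
    ∑ δ ∈ N.divisors,
      r δ * (Nat.gcd δ d : ℤ) ^ 2 * ((N / δ : ℕ) : ℤ) * ((N / d : ℕ) : ℤ) *
        (Nat.gcd d (N / d) : ℤ) = 0)

/-!
For each of these levels the conditions (a), (b), (c), (e) are a linear system in the unknowns
`r_δ`, `δ ∣ N`, of full rank, so a solution is unique as soon as it exists; the classical
Hauptmodul of `X₀(N)` supplies it, and Ligozat's condition (d) is then checked on it directly.
-/

open Finset

theorem HauptmodulExponents.ext {N : ℕ} {r s : ℕ → ℤ} (hr : HauptmodulExponents N r)
    (hs : HauptmodulExponents N s) (h : Set.EqOn r s N.divisors) : r = s := by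
  funext δ
  by_cases hδ : δ ∈ N.divisors
  · exact h hδ
  · rw [hr.1 δ hδ, hs.1 δ hδ]

def genusZeroLevels : Finset ℕ := {2, 3, 4, 5, 6, 7, 8, 9, 10, 12, 13, 16, 18, 25}

/-- The exponent of `η(δτ)` in the classical Hauptmodul of `X₀(N)`,
e.g. `η(τ)^5 η(3τ) / (η(2τ) η(6τ)^5)` for `N = 6`. -/
def hauptmodulExponent : ℕ → ℕ → ℤ
  | 2, 1 => 24 | 2, 2 => -24
  | 3, 1 => 12 | 3, 3 => -12
  | 4, 1 => 8 | 4, 4 => -8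
  | 5, 1 => 6 | 5, 5 => -6
  | 6, 1 => 5 | 6, 2 => -1 | 6, 3 => 1 | 6, 6 => -5
  | 7, 1 => 4 | 7, 7 => -4
  | 8, 1 => 4 | 8, 2 => -2 | 8, 4 => 2 | 8, 8 => -4
  | 9, 1 => 3 | 9, 9 => -3
  | 10, 1 => 3 | 10, 2 => -1 | 10, 5 => 1 | 10, 10 => -3
  | 12, 1 => 3 | 12, 2 => -2 | 12, 3 => -1 | 12, 4 => 1 | 12, 6 => 2 | 12, 12 => -3
  | 13, 1 => 2 | 13, 13 => -2
  | 16, 1 => 2 | 16, 2 => -1 | 16, 8 => 1 | 16, 16 => -2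
  | 18, 1 => 2 | 18, 2 => -1 | 18, 3 => -1 | 18, 6 => 1 | 18, 9 => 1 | 18, 18 => -2
  | 25, 1 => 1 | 25, 25 => -1
  | _, _ => 0

theorem dvd_of_hauptmodulExponent_ne_zero {N δ : ℕ} (h : hauptmodulExponent N δ ≠ 0) :
    δ ∣ N := by
  unfold hauptmodulExponent at h
  split at h <;> first | exact (h rfl).elim | norm_num

theorem hauptmodulExponents_hauptmodulExponent {N : ℕ} (hN : N ∈ genusZeroLevels) :
    HauptmodulExponents N (hauptmodulExponent N) := by
  refine ⟨fun δ hδ => ?_, ?_⟩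
  · have hN₀ : N ≠ 0 := by rintro rfl; simp [genusZeroLevels] at hN
    by_contra h
    exact hδ (Nat.mem_divisors.2 ⟨dvd_of_hauptmodulExponent_ne_zero h, hN₀⟩)
  · simp only [genusZeroLevels] at hN
    fin_cases hN <;> decide

theorem HauptmodulExponents.eqOn_hauptmodulExponent {N : ℕ} {r : ℕ → ℤ}
    (hN : N ∈ genusZeroLevels) (hr : HauptmodulExponents N r) :
    Set.EqOn r (hauptmodulExponent N) N.divisors := by
  obtain ⟨-, ha, hb, hc, he⟩ := hr
  simp only [genusZeroLevels] at hN
  fin_cases hN <;>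
  · simp +decide only [Nat.divisors_ofNat, sum_insert, sum_singleton, mem_insert, mem_singleton,
      forall_eq_or_imp, forall_eq, Set.EqOn, coe_insert, coe_singleton, Set.mem_insert_iff,
      Set.mem_singleton_iff] at ha hb hc he ⊢
    norm_num at he
    simp only [hauptmodulExponent]
    grind

theorem isSquare_prod_hauptmodulExponent {N : ℕ} (hN : N ∈ genusZeroLevels) :
    IsSquare (∏ δ ∈ N.divisors, ((N : ℚ) / (δ : ℚ)) ^ hauptmodulExponent N δ) := by
  simp only [genusZeroLevels] at hN
  fin_cases hN <;>
  · simp +decide only [Nat.divisors_ofNat, prod_insert, prod_singleton, mem_insert,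
      mem_singleton]
    simp only [hauptmodulExponent]
    norm_num

/-- For each genus-0 level `N > 1` there is a unique eta-product exponent family
satisfying (a), (b), (c), (e), and it automatically satisfies the Ligozat
square condition (d). -/
theorem hauptmodul_exponents_existsUnique (N : ℕ)
    (hN : N ∈ ({2, 3, 4, 5, 6, 7, 8, 9, 10, 12, 13, 16, 18, 25} : Finset ℕ)) :
    (∃! r : ℕ → ℤ, HauptmodulExponents N r) ∧
    (∀ r : ℕ → ℤ, HauptmodulExponents N r →
      ∃ q : ℚ, ∏ δ ∈ N.divisors, ((N : ℚ) / (δ : ℚ)) ^ (r δ) = q ^ 2) := by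
  have hr₀ := hauptmodulExponents_hauptmodulExponent hN
  have huniq (r : ℕ → ℤ) (hr : HauptmodulExponents N r) : r = hauptmodulExponent N :=
    hr.ext hr₀ (hr.eqOn_hauptmodulExponent hN)
  refine ⟨⟨_, hr₀, huniq⟩, fun r hr => ?_⟩
  rw [huniq r hr]
  exact (isSquare_prod_hauptmodulExponent hN).exists_sq
end

section
/- Let L/K be a field extension of degree 2 with the characteristic of K not equal to 2, and let 𝐍 denote the image of the norm map Norm_{L/K} : L^× → K^×. Then a nonzero element N ∈ K lies in 𝐍·(L^×)² (i.e., there exist x ∈ L^× and γ ∈ L^× such that N = Norm_{L/K}(x)·γ², the equality holding in L after identifying K with its image in L) if and only if at least one of N or −N lies in 𝐍. -/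
open Polynomial

/-- In a quadratic extension in characteristic `≠ 2`, there is an element `α ∉ K`
with `α ^ 2 = c ∈ K` and `Norm α = -c`. -/
lemma exists_sqrt_gen_aux (K L : Type*) [Field K] [Field L] [Algebra K L]
    (hdim : Module.finrank K L = 2) (hchar : ringChar K ≠ 2) :
    ∃ (α : L) (c : K), α ∉ (algebraMap K L).range ∧ α ^ 2 = algebraMap K L c ∧
      Algebra.norm K α = -c := by
  have hfin : Module.Finite K L := Module.finite_of_finrank_eq_succ hdim
  have h2 : (2 : K) ≠ 0 := Ring.two_ne_zero hchar
  obtain ⟨β, hβ⟩ : ∃ β : L, β ∉ (algebraMap K L).range := by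
    by_contra h
    push_neg at h
    have hbt : (⊥ : Subalgebra K L) = ⊤ := by
      rw [eq_top_iff]
      intro x _
      exact Algebra.mem_bot.mpr (h x)
    have := Subalgebra.bot_eq_top_iff_finrank_eq_one.mp hbt
    rw [this] at hdim
    exact absurd hdim (by norm_num)
  have hint : IsIntegral K β := IsIntegral.of_finite K β
  have hmon : (minpoly K β).Monic := minpoly.monic hint
  have hdegβ : (minpoly K β).natDegree = 2 :=
    le_antisymm (hdim ▸ minpoly.natDegree_le β) ((minpoly.two_le_natDegree_iff hint).mpr hβ)
  set b := (minpoly K β).coeff 1 with hb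
  set c0 := (minpoly K β).coeff 0 with hc0
  have hrel : β ^ 2 + algebraMap K L b * β + algebraMap K L c0 = 0 := by
    have h0 : (Polynomial.aeval β) (minpoly K β) = 0 := minpoly.aeval K β
    rw [Polynomial.aeval_eq_sum_range, hdegβ] at h0
    have hc2 : (minpoly K β).coeff 2 = 1 := by
      have := hmon.coeff_natDegree; rwa [hdegβ] at this
    simp only [Finset.sum_range_succ, Finset.sum_range_zero, zero_add, hc2, one_smul,
      Algebra.smul_def, pow_zero, mul_one, pow_one, map_one] at h0
    linear_combination h0
  set α : L := β + algebraMap K L (b / 2) with hα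
  set c : K := (b / 2) ^ 2 - c0 with hc
  have hαnot : α ∉ (algebraMap K L).range := by
    rintro ⟨k, hk⟩
    apply hβ
    exact ⟨k - b / 2, by rw [map_sub, hk, hα]; ring⟩
  have hA2 : algebraMap K L (b / 2) * 2 = algebraMap K L b := by
    rw [show (2 : L) = algebraMap K L 2 from (map_ofNat (algebraMap K L) 2).symm, ← map_mul]
    congr 1
    field_simp
  have hsq : α ^ 2 = algebraMap K L c := by
    rw [hα, hc, map_sub, map_pow]
    linear_combination hrel + β * hA2
  refine ⟨α, c, hαnot, hsq, ?_⟩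
  -- the minimal polynomial of α is X ^ 2 - C c
  have hαint : IsIntegral K α := IsIntegral.of_finite K α
  have hq0 : (Polynomial.aeval α) (X ^ 2 - C c) = 0 := by
    simp [hsq]
  have hqmon : (X ^ 2 - C c).Monic := monic_X_pow_sub_C c two_ne_zero
  have hαdeg : (minpoly K α).natDegree = 2 :=
    le_antisymm (hdim ▸ minpoly.natDegree_le α) ((minpoly.two_le_natDegree_iff hαint).mpr hαnot)
  have hmin : minpoly K α = X ^ 2 - C c :=
    Polynomial.eq_of_dvd_of_natDegree_le_of_leadingCoeff (minpoly.dvd K α hq0)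
      (by rw [natDegree_X_pow_sub_C, hαdeg])
      (by rw [(minpoly.monic hαint).leadingCoeff, hqmon.leadingCoeff])
  -- build a power basis with generator α
  have hli : LinearIndependent K ![(1 : L), α] := by
    rw [LinearIndependent.pair_iff' one_ne_zero]
    intro a ha
    exact hαnot ⟨a, by rw [← ha, Algebra.smul_def, mul_one]⟩
  have hv : ![(1 : L), α] = fun i : Fin 2 => α ^ (i : ℕ) := by
    funext i; fin_cases i <;> simp
  rw [hv] at hli
  have hcard : Fintype.card (Fin 2) = Module.finrank K L := by simp [hdim]
  let pb : PowerBasis K L :=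
    { gen := α, dim := 2,
      basis := basisOfLinearIndependentOfCardEqFinrank hli hcard,
      basis_eq_pow := fun i =>
        congrFun (coe_basisOfLinearIndependentOfCardEqFinrank hli hcard) i }
  have hnorm := Algebra.PowerBasis.norm_gen_eq_coeff_zero_minpoly pb
  have hgen : pb.gen = α := rfl
  have hdimpb : pb.dim = 2 := rfl
  rw [hgen, hdimpb, hmin] at hnorm
  rw [hnorm]
  simp [coeff_X_pow]

/-- For a quadratic extension `L/K` in characteristic `≠ 2`, a nonzero `N ∈ K`
is a norm times a square if and only if `N` or `−N` is a norm. -/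
theorem norm_mul_square_iff (K L : Type*) [Field K] [Field L] [Algebra K L]
    (hdim : Module.finrank K L = 2) (hchar : ringChar K ≠ 2)
    (N : K) (hN : N ≠ 0) :
    (∃ x γ : L, x ≠ 0 ∧ γ ≠ 0 ∧
        algebraMap K L N = algebraMap K L (Algebra.norm K x) * γ ^ 2) ↔
      ((∃ x : L, x ≠ 0 ∧ Algebra.norm K x = N) ∨
        (∃ x : L, x ≠ 0 ∧ Algebra.norm K x = -N)) := by
  have hfin : Module.Finite K L := Module.finite_of_finrank_eq_succ hdim
  constructor
  · rintro ⟨x, γ, hx, hγ, heq⟩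
    set n := Algebra.norm K x with hn
    have hn0 : n ≠ 0 := Algebra.norm_ne_zero_iff.mpr hx
    have hmapn : algebraMap K L n ≠ 0 := by
      simp [hn0]
    have hγsq : γ ^ 2 = algebraMap K L (N / n) := by
      rw [map_div₀, eq_div_iff hmapn, mul_comm]
      exact heq.symm
    have hsq2 : (Algebra.norm K γ) ^ 2 = (N / n) ^ 2 := by
      rw [← map_pow, hγsq, Algebra.norm_algebraMap, hdim]
    have hfac : (Algebra.norm K γ - N / n) * (Algebra.norm K γ + N / n) = 0 := by
      linear_combination hsq2
    rcases mul_eq_zero.mp hfac with h | h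
    · left
      refine ⟨x * γ, mul_ne_zero hx hγ, ?_⟩
      rw [map_mul, ← hn, sub_eq_zero.mp h]
      field_simp
    · right
      refine ⟨x * γ, mul_ne_zero hx hγ, ?_⟩
      rw [map_mul, ← hn, eq_neg_of_add_eq_zero_left h]
      field_simp
  · rintro (⟨x, hx, hnorm⟩ | ⟨x, hx, hnorm⟩)
    · exact ⟨x, 1, hx, one_ne_zero, by rw [hnorm]; ring⟩
    · obtain ⟨α, c, hαnot, hsq, hnα⟩ := exists_sqrt_gen_aux K L hdim hchar
      have hα0 : α ≠ 0 := by
        rintro rfl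
        exact hαnot ⟨0, by simp⟩
      have hc0 : c ≠ 0 := by
        rintro rfl
        apply hα0
        rw [map_zero] at hsq
        exact pow_eq_zero_iff (two_ne_zero) |>.mp hsq
      refine ⟨x * α, α⁻¹, mul_ne_zero hx hα0, inv_ne_zero hα0, ?_⟩
      rw [map_mul, map_mul, hnorm, hnα, inv_pow, hsq, ← map_inv₀, ← map_mul, ← map_mul]
      congr 1
      field_simp
end
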